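/- arXiv:2512.08711 — 2 statements merged into one kernel-verified Lean document; each statement's English description precedes it below -/
import Mathlib

section
/- Let (W,S) be a dihedral Coxeter system (|S| = 2) and u,v ∈ W such that u ∨_R v exists in the right weak order. Then N(u ∨_R v) = ⟨N(u) ∪ N(v)⟩. -/
/- Common definitions: reflections, inversion sets, Bruhat graph paths, Bruhat preclosure,
   twisted inversion sets, twisted lengths, twisted Bruhat graph/order, reflection orders,
   initial sections, and the right weak order, for a Coxeter system `cs`. -/

namespace CoxeterSystem

variable {B : Type*} {W : Type*} [Group W] {M : CoxeterMatrix B}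
variable (cs : CoxeterSystem M W)

/-- The set of reflections `T`. -/
def reflSet : Set W := {t | cs.IsReflection t}

/-- The inversion set `N(w) = {t ∈ T : ℓ(tw) < ℓ(w)}`. -/
def invSet (w : W) : Set W :=
  {t | cs.IsReflection t ∧ cs.length (t * w) < cs.length w}

/-- One step in the Bruhat graph using only edges labelled (on the right) by elements of `A`:
`u → u * t` with `t ∈ A` a reflection and `ℓ(u) < ℓ(u * t)`. -/
def AStep (A : Set W) (u v : W) : Prop :=
  ∃ t ∈ A, cs.IsReflection t ∧ v = u * t ∧ cs.length u < cs.length v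

/-- The (right) Bruhat preclosure `⟨A⟩`: reflections reachable from the identity by a path in the
Bruhat graph all of whose edge labels lie in `A`. -/
def bclosure (A : Set W) : Set W :=
  {t | cs.IsReflection t ∧ Relation.ReflTransGen (cs.AStep A) 1 t}

/-- The twisted inversion set `w · A = N(w) △ w A w⁻¹`. -/
def twisted (w : W) (A : Set W) : Set W :=
  symmDiff (cs.invSet w) ((fun x => w * x * w⁻¹) '' A)

/-- The twisted length `ℓ_A(v, w) = ℓ(w v⁻¹) - 2 |N(v w⁻¹) ∩ v · A|`. -/
noncomputable def tlen (A : Set W) (v w : W) : ℤ :=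
  (cs.length (w * v⁻¹) : ℤ) - 2 * ((cs.invSet (v * w⁻¹)) ∩ cs.twisted v A).ncard

/-- The one-argument twisted length `ℓ_A(w) = ℓ_A(e, w) = ℓ(w) - 2 |N(w⁻¹) ∩ A|`. -/
noncomputable def tlen₀ (A : Set W) (w : W) : ℤ :=
  (cs.length w : ℤ) - 2 * ((cs.invSet w⁻¹) ∩ A).ncard

/-- An edge of the twisted Bruhat graph `Ω_{(W,A)}`: Bruhat graph edges with labels not in `A`,
and reversed Bruhat graph edges with labels in `A`. -/
def TwEdge (A : Set W) (u v : W) : Prop :=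
  (∃ t, cs.IsReflection t ∧ t ∉ A ∧ v = u * t ∧ cs.length u < cs.length v) ∨
  (∃ t, cs.IsReflection t ∧ t ∈ A ∧ u = v * t ∧ cs.length v < cs.length u)

/-- The twisted Bruhat order `u ≤_A v`: reachability in the twisted Bruhat graph. -/
def tle (A : Set W) (u v : W) : Prop := Relation.ReflTransGen (cs.TwEdge A) u v

/-- A reflection subgroup: a subgroup generated by the reflections it contains. -/
def IsReflectionSubgroup (W' : Subgroup W) : Prop :=
  W' = Subgroup.closure ((W' : Set W) ∩ cs.reflSet)

/-- The canonical generators `χ(W') = {t ∈ T : N(t) ∩ W' = {t}}` of a reflection subgroup. -/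
def chi (W' : Subgroup W) : Set W :=
  {t | cs.IsReflection t ∧ cs.invSet t ∩ (W' : Set W) = {t}}

/-- A reflection order: a strict total order on the set of reflections such that for every
dihedral reflection subgroup `W'` with canonical generators `{r, s}`, `r ≠ s`, if `r ≺ s` then
every reflection of `W'` lies (weakly) between `r` and `s`.  (This betweenness condition for
*all* dihedral reflection subgroups is equivalent to the alternating-chain condition
`r ≺ rsr ≺ ⋯ ≺ srs ≺ s`.) -/
def IsReflectionOrder (lt : W → W → Prop) : Prop :=
  (∀ t ∈ cs.reflSet, ¬ lt t t) ∧
  (∀ t₁ ∈ cs.reflSet, ∀ t₂ ∈ cs.reflSet, ∀ t₃ ∈ cs.reflSet,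
      lt t₁ t₂ → lt t₂ t₃ → lt t₁ t₃) ∧
  (∀ t₁ ∈ cs.reflSet, ∀ t₂ ∈ cs.reflSet, t₁ = t₂ ∨ lt t₁ t₂ ∨ lt t₂ t₁) ∧
  (∀ W' : Subgroup W, cs.IsReflectionSubgroup W' →
    ∀ r s : W, cs.chi W' = {r, s} → r ≠ s → lt r s →
      ∀ t ∈ (W' : Set W) ∩ cs.reflSet, (t = r ∨ lt r t) ∧ (t = s ∨ lt t s))

/-- `A` is an initial section of some reflection order. -/
def IsInitialSection (A : Set W) : Prop :=
  A ⊆ cs.reflSet ∧ ∃ lt : W → W → Prop, cs.IsReflectionOrder lt ∧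
    ∀ a ∈ A, ∀ b ∈ cs.reflSet \ A, lt a b

/-- The right weak order, characterized by containment of inversion sets. -/
def wle (u v : W) : Prop := cs.invSet u ⊆ cs.invSet v

/-- `j` is the join `u ∨_R v` in the right weak order. -/
def IsJoin (u v j : W) : Prop :=
  cs.wle u j ∧ cs.wle v j ∧ ∀ z : W, cs.wle u z → cs.wle v z → cs.wle j z

/-- The Bruhat preclosure computed inside a subgroup `H` of `W` (for a standard parabolic
subgroup `H = W_I`, the length function and the reflections of `W_I` are the restrictions of
those of `W`, so this is the Bruhat preclosure of the Coxeter system `(W_I, I)`). -/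
def bclosureIn (H : Subgroup W) (A : Set W) : Set W :=
  {t | cs.IsReflection t ∧ t ∈ H ∧
    Relation.ReflTransGen (fun u v => u ∈ H ∧ v ∈ H ∧ cs.AStep A u v) 1 t}

end CoxeterSystem

/-!
A dihedral Coxeter group acts simply transitively on the chambers of its Coxeter complex, a circle
cut into `2m` arcs, and `ℓ(w)` is the distance from the chamber of `w` to the base chamber `0`.
If `p ∈ (-m, m]` is the position of the chamber of `w`, then `N(w)` consists of the reflections
whose chambers lie strictly between `0` and `2p`. So inversion sets sharing a simple reflection are
nested, and otherwise `N(u) ∪ N(v)` contains both simple reflections. In the nested case `N(u ∨ v)`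
is the larger of the two; in the other case `N(u ∨ v) ⊆ T = ⟨S⟩`, as reduced words are Bruhat
paths. The reverse inclusion reduces to `⟨N(w)⟩ ⊆ N(w)`: along a Bruhat path `x → x t` from `1`
with labels `t ∈ N(w)`, the chamber of `x⁻¹` is reflected in the wall of `t`; it stays at `0` or
strictly between `0` and `2p`, since leaving this arc would force `ℓ(x t) ≤ ℓ(x)`.
-/

namespace ZMod

theorem natAbs_valMinAbs_intCast_le {n : ℕ} (k : ℤ) :
    (k : ZMod n).valMinAbs.natAbs ≤ k.natAbs := by
  rcases Nat.eq_zero_or_pos n with rfl | hn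
  · rfl
  · have : NeZero n := ⟨hn.ne'⟩
    exact natAbs_min_of_le_div_two n _ k (coe_valMinAbs _) (natAbs_valMinAbs_le _)

theorem valMinAbs_intCast_of_bounds {n : ℕ} {k : ℤ} (hk : n = 0 ∨ -(n : ℤ) < 2 * k ∧ 2 * k ≤ n) :
    (k : ZMod n).valMinAbs = k := by
  rcases Nat.eq_zero_or_pos n with rfl | hn
  · rfl
  · have : NeZero n := ⟨hn.ne'⟩
    rw [valMinAbs_spec]
    exact ⟨rfl, by omega, by omega⟩

theorem valMinAbs_bounds {n : ℕ} (x : ZMod n) :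
    n = 0 ∨ -(n : ℤ) < 2 * x.valMinAbs ∧ 2 * x.valMinAbs ≤ n := by
  rcases Nat.eq_zero_or_pos n with hn | hn
  · exact .inl hn
  · have : NeZero n := ⟨hn.ne'⟩
    have := valMinAbs_mem_Ioc x
    rw [Set.mem_Ioc] at this
    omega

theorem eq_or_eq_add_or_eq_sub_of_intCast_eq_intCast {n : ℕ} {a b : ℤ} (h : (a : ZMod n) = b)
    (hab : n = 0 ∨ |a - b| < 2 * n) : a = b ∨ a = b + n ∨ a = b - n := by
  obtain ⟨c, hc⟩ := (intCast_eq_intCast_iff_dvd_sub a b n).mp h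
  rcases hab with rfl | hab
  · simp at hc; omega
  rw [abs_lt] at hab
  have : -2 < c := by by_contra! hc'; nlinarith
  have : c < 2 := by by_contra! hc'; nlinarith
  interval_cases c <;> omega

theorem two_mul_natCast_self (m : ℕ) : 2 * (m : ZMod (2 * m)) = 0 := by
  exact_mod_cast natCast_self (2 * m)

end ZMod

namespace CoxeterSystem

section General

variable {B W : Type*} [Group W] {M : CoxeterMatrix B} (cs : CoxeterSystem M W)

theorem subset_bclosure {A : Set W} (hA : A ⊆ cs.reflSet) : A ⊆ cs.bclosure A := fun t ht =>
  ⟨hA ht, .single ⟨t, ht, hA ht, (one_mul t).symm, by simpa using (hA ht).odd_length.pos⟩⟩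

theorem bclosure_mono {A A' : Set W} (h : A ⊆ A') : cs.bclosure A ⊆ cs.bclosure A' :=
  fun _ ⟨ht, hpath⟩ =>
    ⟨ht, Relation.ReflTransGen.mono (fun _ _ ⟨t, htA, hstep⟩ => ⟨t, h htA, hstep⟩) _ _ hpath⟩

theorem reflTransGen_aStep_range_simple (w : W) :
    Relation.ReflTransGen (cs.AStep (Set.range cs.simple)) 1 w := by
  induction hw : cs.length w using Nat.strong_induction_on generalizing w with
  | _ n ih =>
    obtain rfl | h1 := eq_or_ne w 1
    · rfl
    obtain ⟨i, hi⟩ := cs.exists_rightDescent_of_ne_one h1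
    exact .tail (ih _ (hw ▸ hi) _ rfl) ⟨cs.simple i, ⟨i, rfl⟩, cs.isReflection_simple i,
      (cs.simple_mul_simple_cancel_right i).symm, hi⟩

theorem reflSet_subset_bclosure {A : Set W} (hA : Set.range cs.simple ⊆ A) :
    cs.reflSet ⊆ cs.bclosure A :=
  fun t ht => cs.bclosure_mono hA ⟨ht, cs.reflTransGen_aStep_range_simple t⟩

end General

section Dihedral

variable {W : Type*} [Group W] {M : CoxeterMatrix (Fin 2)} (cs : CoxeterSystem M W)

theorem isLiftable_subLeft :
    M.IsLiftable fun i => Equiv.subLeft (if i = 0 then 1 else -1 : ZMod (2 * M 0 1)) := by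
  have hmul (a b : ZMod (2 * M 0 1)) :
      Equiv.subLeft a * Equiv.subLeft b = Equiv.addRight (a - b) := by
    ext x; simp; ring
  have hpow (a b : ZMod (2 * M 0 1)) (h : b - a = 2 ∨ a - b = 2) :
      (Equiv.subLeft a * Equiv.subLeft b) ^ M 0 1 = 1 := by
    rw [hmul, Equiv.nsmul_addRight, nsmul_eq_mul, ← Equiv.addRight_zero]
    congr 1
    rcases h with h | h
    · rw [← neg_sub, h]; linear_combination -ZMod.two_mul_natCast_self (M 0 1)
    · rw [h]; linear_combination ZMod.two_mul_natCast_self (M 0 1)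
  intro i i'
  fin_cases i <;> fin_cases i'
  · simp [hmul]
  · exact hpow _ _ (.inr (by norm_num))
  · simpa [M.symmetric 1 0] using hpow (-1) 1 (.inl (by norm_num))
  · simp [hmul]

/-- `W` permutes the chambers `ZMod (2 m)` of its Coxeter complex (`ℤ` when `m = 0`, i.e. `m = ∞`),
`s₀` and `s₁` being the reflections in the two walls of the base chamber `0`. -/
noncomputable def chamberAction : W →* Equiv.Perm (ZMod (2 * M 0 1)) :=
  cs.lift ⟨_, isLiftable_subLeft⟩

noncomputable def chamber (w : W) : ZMod (2 * M 0 1) := cs.chamberAction w 0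

@[simp]
theorem chamberAction_simple_apply (i : Fin 2) (x : ZMod (2 * M 0 1)) :
    cs.chamberAction (cs.simple i) x = (if i = 0 then 1 else -1) - x := by
  simp [chamberAction, cs.lift_apply_simple]

theorem chamberAction_apply (w : W) (x : ZMod (2 * M 0 1)) :
    cs.chamberAction w x = cs.chamber w + (-1) ^ cs.length w * x := by
  induction w using cs.simple_induction_left generalizing x with
  | one => simp only [map_one, chamber, Equiv.Perm.one_apply, cs.length_one, pow_zero]; ring
  | mul_simple_left w i ih =>
    have hsign :
        (-1 : ZMod (2 * M 0 1)) ^ cs.length (cs.simple i * w) = -(-1) ^ cs.length w := by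
      rcases cs.length_simple_mul w i with h | h
      · rw [h, pow_succ]; ring
      · rw [← h, pow_succ]; ring
    rw [chamber, map_mul, Equiv.Perm.mul_apply, Equiv.Perm.mul_apply, chamberAction_simple_apply,
      chamberAction_simple_apply, ih x, ih 0, hsign]
    ring

theorem chamber_mul (u v : W) :
    cs.chamber (u * v) = cs.chamber u + (-1) ^ cs.length u * cs.chamber v := by
  rw [← chamberAction_apply, chamber, map_mul, Equiv.Perm.mul_apply, chamber]

theorem chamber_reflection_mul {t : W} (ht : cs.IsReflection t) (w : W) :
    cs.chamber (t * w) = cs.chamber t - cs.chamber w := by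
  rw [chamber_mul, ht.odd_length.neg_one_pow]
  ring

@[simp]
theorem chamber_one : cs.chamber 1 = 0 := by simp [chamber]

@[simp]
theorem chamber_simple (i : Fin 2) : cs.chamber (cs.simple i) = if i = 0 then 1 else -1 := by
  simp [chamber]

theorem simple_zero_mul_zpow (e : ℤ) :
    cs.simple 0 * (cs.simple 0 * cs.simple 1) ^ e =
      (cs.simple 0 * cs.simple 1) ^ (-e) * cs.simple 0 := by
  have hconj : cs.simple 0 * (cs.simple 0 * cs.simple 1) * (cs.simple 0)⁻¹ =
      (cs.simple 0 * cs.simple 1)⁻¹ := by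
    simp [cs.inv_simple, ← mul_assoc]
  rw [zpow_neg, ← inv_zpow, ← hconj, conj_zpow, inv_mul_cancel_right]

theorem exists_eq_zpow_or_eq_zpow_mul (w : W) : ∃ e : ℤ,
    w = (cs.simple 0 * cs.simple 1) ^ e ∨ w = (cs.simple 0 * cs.simple 1) ^ e * cs.simple 0 := by
  have hs1 : cs.simple 1 = (cs.simple 0 * cs.simple 1) ^ (-1 : ℤ) * cs.simple 0 := by
    simp [cs.inv_simple, mul_assoc]
  have hs0 := cs.simple_zero_mul_zpow
  set g := cs.simple 0 * cs.simple 1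
  induction w using cs.simple_induction_left with
  | one => exact ⟨0, .inl (zpow_zero _).symm⟩
  | mul_simple_left w i ih =>
    obtain ⟨e, rfl | rfl⟩ := ih <;> obtain rfl | rfl : i = 0 ∨ i = 1 := by omega
    · exact ⟨-e, .inr (hs0 e)⟩
    · refine ⟨-1 - e, .inr ?_⟩
      rw [hs1, mul_assoc, hs0, ← mul_assoc, ← zpow_add]
      ring_nf
    · exact ⟨-e, .inl (by rw [← mul_assoc, hs0, cs.simple_mul_simple_cancel_right])⟩
    · refine ⟨-1 - e, .inl ?_⟩
      rw [hs1, mul_assoc, ← mul_assoc (cs.simple 0), hs0, cs.simple_mul_simple_cancel_right,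
        ← zpow_add]
      ring_nf

theorem chamberAction_zpow (e : ℤ) :
    cs.chamberAction ((cs.simple 0 * cs.simple 1) ^ e) = Equiv.addRight (2 * (e : ZMod _)) := by
  have : cs.chamberAction (cs.simple 0 * cs.simple 1) = Equiv.addRight 2 := by
    ext x; simp; ring
  rw [map_zpow, this, Equiv.zsmul_addRight, zsmul_eq_mul]
  exact congrArg _ (mul_comm _ _)

theorem eq_one_of_chamber_eq_zero {w : W} (h : cs.chamber w = 0) : w = 1 := by
  obtain ⟨e, rfl | rfl⟩ := cs.exists_eq_zpow_or_eq_zpow_mul w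
  · simp only [chamber, chamberAction_zpow, Equiv.coe_addRight, zero_add] at h
    obtain ⟨c, hc⟩ := (ZMod.intCast_zmod_eq_zero_iff_dvd (2 * e) _).mp (by exact_mod_cast h)
    rw [show e = M 0 1 * c by push_cast at hc; linarith, zpow_mul, zpow_natCast,
      cs.simple_mul_simple_pow, one_zpow]
  · simp only [chamber, map_mul, Equiv.Perm.mul_apply, chamberAction_zpow,
      chamberAction_simple_apply, Equiv.coe_addRight] at h
    obtain ⟨c, hc⟩ :=
      (ZMod.intCast_zmod_eq_zero_iff_dvd (1 + 2 * e) _).mp (by push_cast; simpa [add_comm] using h)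
    have : (2 : ℤ) ∣ 1 + 2 * e := ⟨M 0 1 * c, by push_cast at hc; rw [hc]; ring⟩
    omega

noncomputable def signedLength (w : W) : ℤ := (cs.chamber w).valMinAbs

theorem chamber_eq_signedLength (w : W) : cs.chamber w = cs.signedLength w :=
  (ZMod.coe_valMinAbs _).symm

theorem signedLength_bounds (w : W) :
    M 0 1 = 0 ∨ -(M 0 1 : ℤ) < cs.signedLength w ∧ cs.signedLength w ≤ M 0 1 := by
  have := (cs.chamber w).valMinAbs_bounds
  push_cast at this
  unfold signedLength
  omega

theorem natAbs_signedLength_wordProd_le (ω : List (Fin 2)) :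
    (cs.signedLength (cs.wordProd ω)).natAbs ≤ ω.length := by
  induction ω with
  | nil => simp [signedLength]
  | cons i ω ih =>
    have hi : (cs.chamber (cs.simple i)).valMinAbs.natAbs ≤ 1 := by
      rw [chamber_simple]
      split_ifs
      · exact_mod_cast ZMod.natAbs_valMinAbs_intCast_le (n := 2 * M 0 1) 1
      · exact_mod_cast ZMod.natAbs_valMinAbs_intCast_le (n := 2 * M 0 1) (-1)
    rw [wordProd_cons, signedLength, chamber_reflection_mul _ (cs.isReflection_simple i),
      sub_eq_add_neg, List.length_cons]
    calc _ ≤ _ := ZMod.natAbs_valMinAbs_add_le _ _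
      _ ≤ _ := Int.natAbs_add_le _ _
      _ ≤ 1 + ω.length := by rw [ZMod.natAbs_valMinAbs_neg]; exact add_le_add hi ih
      _ = ω.length + 1 := add_comm _ _

theorem exists_natAbs_signedLength_simple_mul_lt {w : W} (hw : cs.signedLength w ≠ 0) :
    ∃ i, (cs.signedLength (cs.simple i * w)).natAbs < (cs.signedLength w).natAbs := by
  have hmem := cs.signedLength_bounds w
  have hmul (i : Fin 2) (c : ℤ) (hc : cs.chamber (cs.simple i) = c)
      (hcw : M 0 1 = 0 ∨ -(M 0 1 : ℤ) < c - cs.signedLength w ∧ c - cs.signedLength w ≤ M 0 1) :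
      cs.signedLength (cs.simple i * w) = c - cs.signedLength w := by
    rw [signedLength, chamber_reflection_mul _ (cs.isReflection_simple i), hc,
      chamber_eq_signedLength, ← Int.cast_sub, ZMod.valMinAbs_intCast_of_bounds]
    push_cast
    omega
  rcases hw.lt_or_gt with hneg | hpos
  · exact ⟨1, by rw [hmul 1 (-1) (by simp) (by omega)]; omega⟩
  · exact ⟨0, by rw [hmul 0 1 (by simp) (by omega)]; omega⟩

theorem length_le_natAbs_signedLength (w : W) : cs.length w ≤ (cs.signedLength w).natAbs := by
  induction hd : (cs.signedLength w).natAbs using Nat.strong_induction_on generalizing w with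
  | _ d ih =>
    obtain h0 | h0 := eq_or_ne (cs.signedLength w) 0
    · have hw : w = 1 := cs.eq_one_of_chamber_eq_zero (by rw [chamber_eq_signedLength, h0, Int.cast_zero])
      simp [hw]
    obtain ⟨i, hi⟩ := cs.exists_natAbs_signedLength_simple_mul_lt h0
    have := ih _ (hd ▸ hi) _ rfl
    calc cs.length w = cs.length (cs.simple i * (cs.simple i * w)) := by
          rw [simple_mul_simple_cancel_left]
      _ ≤ cs.length (cs.simple i) + cs.length (cs.simple i * w) := cs.length_mul_le _ _
      _ ≤ d := by rw [length_simple]; omega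

theorem abs_signedLength (w : W) : |cs.signedLength w| = cs.length w := by
  rw [← Int.natCast_natAbs, Nat.cast_inj]
  refine le_antisymm ?_ (cs.length_le_natAbs_signedLength w)
  obtain ⟨ω, hω, rfl⟩ := cs.exists_isReduced w
  exact hω.eq ▸ cs.natAbs_signedLength_wordProd_le ω

theorem length_le_abs_of_chamber_eq {w : W} {r : ℤ} (h : cs.chamber w = r) :
    (cs.length w : ℤ) ≤ |r| := by
  rw [← abs_signedLength, signedLength, h, ← Int.natCast_natAbs, ← Int.natCast_natAbs]
  exact_mod_cast ZMod.natAbs_valMinAbs_intCast_le r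

theorem signedLength_eq_of_chamber_eq {w : W} {r : ℤ} (h : cs.chamber w = r)
    (hr : M 0 1 = 0 ∨ |r| < 3 * M 0 1) :
    cs.signedLength w = r ∨ cs.signedLength w = r + 2 * M 0 1 ∨
      cs.signedLength w = r - 2 * M 0 1 := by
  have hmem := cs.signedLength_bounds w
  have := ZMod.eq_or_eq_add_or_eq_sub_of_intCast_eq_intCast
    ((cs.chamber_eq_signedLength w).symm.trans h) (by push_cast; rw [abs_lt] at *; omega)
  push_cast at this
  exact this

theorem mem_invSet_iff {t w : W} : t ∈ cs.invSet w ↔ cs.IsReflection t ∧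
    ∃ y : ℤ, cs.chamber t = y ∧ |y - cs.signedLength w| < |cs.signedLength w| := by
  refine ⟨fun ⟨ht, hlt⟩ => ⟨ht, cs.signedLength (t * w) + cs.signedLength w, ?_, ?_⟩,
    fun ⟨ht, y, hy, hlt⟩ => ⟨ht, ?_⟩⟩
  · push_cast
    rw [← chamber_eq_signedLength, ← chamber_eq_signedLength, chamber_reflection_mul _ ht]
    ring
  · rw [add_sub_cancel_right, abs_signedLength, abs_signedLength]
    exact_mod_cast hlt
  · have := cs.length_le_abs_of_chamber_eq (w := t * w) (r := y - cs.signedLength w)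
      (by rw [chamber_reflection_mul _ ht, hy, chamber_eq_signedLength]; push_cast; ring)
    rw [abs_signedLength] at hlt
    exact_mod_cast this.trans_lt hlt

theorem invSet_subset_invSet_of_signedLength {u v : W}
    (h : 0 ≤ cs.signedLength u ∧ cs.signedLength u ≤ cs.signedLength v ∨
      cs.signedLength v ≤ cs.signedLength u ∧ cs.signedLength u ≤ 0) :
    cs.invSet u ⊆ cs.invSet v := by
  intro t ht
  obtain ⟨htr, y, hy, hlt⟩ := cs.mem_invSet_iff.mp ht
  refine cs.mem_invSet_iff.mpr ⟨htr, y, hy, ?_⟩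
  rw [abs_lt] at hlt ⊢
  cases abs_cases (cs.signedLength u) <;> cases abs_cases (cs.signedLength v) <;> omega

theorem simple_zero_mem_invSet_of_signedLength_pos {w : W} (h : 0 < cs.signedLength w) :
    cs.simple 0 ∈ cs.invSet w :=
  cs.mem_invSet_iff.mpr ⟨cs.isReflection_simple 0, 1, by simp, by
    rw [abs_of_pos h, abs_lt]; omega⟩

theorem simple_one_mem_invSet_of_signedLength_neg {w : W} (h : cs.signedLength w < 0) :
    cs.simple 1 ∈ cs.invSet w :=
  cs.mem_invSet_iff.mpr ⟨cs.isReflection_simple 1, -1, by simp, by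
    rw [abs_of_neg h, abs_lt]; omega⟩

theorem invSet_subset_or_subset_or_range_simple_subset (u v : W) :
    cs.invSet u ⊆ cs.invSet v ∨ cs.invSet v ⊆ cs.invSet u ∨
      Set.range cs.simple ⊆ cs.invSet u ∪ cs.invSet v := by
  set p := cs.signedLength u
  set q := cs.signedLength v
  rcases (by omega : (0 ≤ p ∧ p ≤ q ∨ q ≤ p ∧ p ≤ 0) ∨ (0 ≤ q ∧ q ≤ p ∨ p ≤ q ∧ q ≤ 0) ∨
      (0 < p ∧ q < 0) ∨ (p < 0 ∧ 0 < q)) with h | h | h | h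
  · exact .inl (cs.invSet_subset_invSet_of_signedLength h)
  · exact .inr (.inl (cs.invSet_subset_invSet_of_signedLength h))
  all_goals
    refine .inr (.inr ?_)
    rintro _ ⟨i, rfl⟩
    obtain rfl | rfl : i = 0 ∨ i = 1 := by omega
  · exact .inl (cs.simple_zero_mem_invSet_of_signedLength_pos h.1)
  · exact .inr (cs.simple_one_mem_invSet_of_signedLength_neg h.2)
  · exact .inr (cs.simple_zero_mem_invSet_of_signedLength_pos h.2)
  · exact .inl (cs.simple_one_mem_invSet_of_signedLength_neg h.1)

theorem exists_chamber_inv_mul_eq {w x t : W} {c : ℤ} (hx : cs.chamber x⁻¹ = c)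
    (hc : c = 0 ∨ |c - cs.signedLength w| < |cs.signedLength w|) (ht : t ∈ cs.invSet w)
    (hlt : cs.length x < cs.length (x * t)) : ∃ c' : ℤ, cs.chamber (x * t)⁻¹ = c' ∧
      (c' = 0 ∨ |c' - cs.signedLength w| < |cs.signedLength w|) := by
  obtain ⟨htr, y, hy, hyw⟩ := cs.mem_invSet_iff.mp ht
  have hxt (k : ℤ) : cs.chamber (x * t)⁻¹ = (y - c + 2 * M 0 1 * k : ℤ) := by
    rw [mul_inv_rev, htr.inv, chamber_reflection_mul _ htr, hy, hx]
    push_cast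
    rw [ZMod.two_mul_natCast_self, zero_mul, add_zero]
  rcases hc with rfl | hc
  · exact ⟨y, by simpa using hxt 0, .inr (by simpa using hyw)⟩
  have hub := cs.length_le_abs_of_chamber_eq (hxt 0)
  have hp := cs.signedLength_bounds w
  have hsx := cs.signedLength_eq_of_chamber_eq hx (by
    rw [abs_sub_lt_iff] at hc; rw [abs_lt]; cases abs_cases (cs.signedLength w) <;> omega)
  have hsx' := cs.signedLength_bounds x⁻¹
  have hlx := cs.abs_signedLength x⁻¹
  rw [length_inv] at hub hlx
  -- the reflected chamber `y - c` is in the arc, possibly after once around the circle,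
  -- unless the length drops
  have : |y - c + 2 * M 0 1 * 0 - cs.signedLength w| < |cs.signedLength w| ∨
      |y - c + 2 * M 0 1 * 1 - cs.signedLength w| < |cs.signedLength w| ∨
      |y - c + 2 * M 0 1 * (-1) - cs.signedLength w| < |cs.signedLength w| := by
    simp only [abs_sub_lt_iff] at hyw hc ⊢
    cases abs_cases (cs.signedLength w) <;> cases abs_cases (cs.signedLength x⁻¹) <;>
      cases abs_cases (y - c + 2 * M 0 1 * 0) <;> omega
  rcases this with h | h | h
  exacts [⟨_, hxt 0, .inr h⟩, ⟨_, hxt 1, .inr h⟩, ⟨_, hxt (-1), .inr h⟩]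

theorem exists_chamber_inv_eq_of_reflTransGen {w x : W}
    (h : Relation.ReflTransGen (cs.AStep (cs.invSet w)) 1 x) : ∃ c : ℤ, cs.chamber x⁻¹ = c ∧
      (c = 0 ∨ |c - cs.signedLength w| < |cs.signedLength w|) := by
  induction h with
  | refl => exact ⟨0, by simp, .inl rfl⟩
  | tail _ hstep ih =>
    obtain ⟨c, hx, hc⟩ := ih
    obtain ⟨t, ht, -, rfl, hlt⟩ := hstep
    exact cs.exists_chamber_inv_mul_eq hx hc ht hlt

theorem bclosure_invSet_subset (w : W) : cs.bclosure (cs.invSet w) ⊆ cs.invSet w := by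
  rintro t ⟨ht, hpath⟩
  obtain ⟨c, hc, hcw⟩ := cs.exists_chamber_inv_eq_of_reflTransGen hpath
  rw [ht.inv] at hc
  refine cs.mem_invSet_iff.mpr ⟨ht, c, hc, hcw.resolve_left ?_⟩
  rintro rfl
  simpa [cs.eq_one_of_chamber_eq_zero (w := t) (by simpa using hc)] using ht.odd_length.pos

end Dihedral

end CoxeterSystem

open CoxeterSystem in
/-- In a dihedral Coxeter system (two simple reflections), if the join `u ∨_R v` exists in the
right weak order then `N(u ∨_R v) = ⟨N(u) ∪ N(v)⟩`. -/
theorem invSet_join_eq_bclosure_dihedral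
    {W : Type*} [Group W] {M : CoxeterMatrix (Fin 2)} (cs : CoxeterSystem M W)
    (u v j : W) (hjoin : cs.IsJoin u v j) :
    cs.invSet j = cs.bclosure (cs.invSet u ∪ cs.invSet v) := by
  obtain ⟨hu, hv, hmin⟩ := hjoin
  refine subset_antisymm ?_
    ((cs.bclosure_mono (Set.union_subset hu hv)).trans (cs.bclosure_invSet_subset j))
  rcases cs.invSet_subset_or_subset_or_range_simple_subset u v with h | h | h
  · calc cs.invSet j ⊆ cs.invSet v := hmin v h subset_rfl
      _ ⊆ cs.bclosure (cs.invSet v) := cs.subset_bclosure fun _ ht => ht.1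
      _ ⊆ _ := cs.bclosure_mono Set.subset_union_right
  · calc cs.invSet j ⊆ cs.invSet u := hmin u subset_rfl h
      _ ⊆ cs.bclosure (cs.invSet u) := cs.subset_bclosure fun _ ht => ht.1
      _ ⊆ _ := cs.bclosure_mono Set.subset_union_left
  · exact fun t ht => cs.reflSet_subset_bclosure h ht.1
end

section
/- Let (W,S) be a Coxeter system, I ⊆ S, and x ∈ W^I a minimal length coset representative. Then x·⟨I⟩_{W_I}·x⁻¹ = ⟨xIx⁻¹⟩, i.e., conjugating the Bruhat preclosure (computed in W_I) of the simple reflections I by x equals the Bruhat preclosure in W of the conjugated set xIx⁻¹. -/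
/-!
Conjugation by `x` sends the Bruhat edge `u → u s` (`u ∈ W_I`, `s ∈ I`) to the edge
`x u x⁻¹ → x u x⁻¹ · x s x⁻¹`, and preserves its direction. To see this, use the sign cocycle
`η(w, t) ∈ {±1}`, which is `-1` exactly on the left inversions `t` of `w` and satisfies
`η(u v, t) = η(u, t) η(v, u⁻¹ t u)`: expanding `η(x u⁻¹ x⁻¹, x s x⁻¹)` leaves `η(u⁻¹, s)` times
factors `η(x⁻¹, r)` with `r` a reflection of `W_I`, and these are `1` because `x` is the shortest
element of `x W_I`. Edges labelled by `x I x⁻¹` starting in `x W_I x⁻¹` stay there, so the labelled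
paths from the identity correspond under conjugation.
-/

theorem SemidirectProduct.mk_pow {N G : Type*} [CommGroup N] [Group G] (φ : G →* MulAut N)
    (a : N) (g : G) (n : ℕ) :
    (⟨a, g⟩ : N ⋊[φ] G) ^ n = ⟨∏ k ∈ Finset.range n, φ (g ^ k) a, g ^ n⟩ := by
  induction n with
  | zero => ext <;> simp
  | succ n ih =>
    rw [pow_succ', ih, SemidirectProduct.mul_def, map_prod, Finset.prod_range_succ', pow_succ',
      pow_zero, map_one, MulAut.one_apply, mul_comm a]
    simp only [← MulAut.mul_apply, ← map_mul, ← pow_succ']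

namespace CoxeterSystem

variable {B : Type*} {W : Type*} [Group W] {M : CoxeterMatrix B} (cs : CoxeterSystem M W)

local prefix:100 "s " => cs.simple
local prefix:100 "π " => cs.wordProd
local prefix:100 "ℓ " => cs.length
local prefix:100 "ris " => cs.rightInvSeq
local prefix:100 "lis " => cs.leftInvSeq

def conjPrecomp : W →* MulAut (W → ℤˣ) where
  toFun w :=
    { toFun := fun f t => f (w⁻¹ * t * w)
      invFun := fun f t => f (w * t * w⁻¹)
      left_inv := fun f => by ext t; simp [mul_assoc]
      right_inv := fun f => by ext t; simp [mul_assoc]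
      map_mul' := fun _ _ => rfl }
  map_one' := by ext; simp
  map_mul' := fun _ _ => by ext; simp [mul_assoc]

@[simp]
lemma conjPrecomp_apply (w : W) (f : W → ℤˣ) (t : W) : conjPrecomp w f t = f (w⁻¹ * t * w) := rfl

open scoped Classical in
lemma conjPrecomp_mulSingle (w r : W) :
    conjPrecomp w (Pi.mulSingle r (-1)) = Pi.mulSingle (w * r * w⁻¹) (-1) := by
  ext t
  have : w⁻¹ * t * w = r ↔ t = w * r * w⁻¹ := by
    constructor
    · rintro rfl; group
    · rintro rfl; group
  simp only [conjPrecomp_apply, Pi.mulSingle_apply, this]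

open scoped Classical in
noncomputable def signGen (i : B) : (W → ℤˣ) ⋊[conjPrecomp] W :=
  ⟨Pi.mulSingle (s i) (-1), s i⟩

lemma simple_mul_simple_pow_conj (i j : B) (k : ℕ) :
    (s i * s j) ^ k * s i * ((s i * s j) ^ k)⁻¹ = (s i * s j) ^ (2 * k) * s i := by
  have h : SemiconjBy (s i) (s i * s j)⁻¹ (s i * s j) := by
    simp [SemiconjBy, mul_assoc]
  rw [mul_assoc, ← inv_pow, (h.pow_right k).eq, ← mul_assoc, ← pow_add, two_mul]

open scoped Classical in
lemma isLiftable_signGen : M.IsLiftable cs.signGen := by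
  intro i j
  set c := s i * s j
  set d : ℕ → W → ℤˣ := fun l => Pi.mulSingle (c ^ l * s i) (-1)
  have hd : ∀ k l, conjPrecomp (c ^ k) (d l) = d (l + 2 * k) := by
    intro k l
    simp only [d, conjPrecomp_mulSingle]
    congr 1
    calc c ^ k * (c ^ l * s i) * (c ^ k)⁻¹ = c ^ l * (c ^ k * s i * (c ^ k)⁻¹) := by
          rw [← mul_assoc, (Commute.pow_pow_self c k l).eq]; group
      _ = c ^ (l + 2 * k) * s i := by
          rw [cs.simple_mul_simple_pow_conj, ← mul_assoc, ← pow_add]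
  have hgen : cs.signGen i * cs.signGen j = ⟨d 0 * d 1, c⟩ := by
    rw [signGen, signGen, SemidirectProduct.mul_def, conjPrecomp_mulSingle, inv_simple]
    simp only [d, pow_zero, one_mul, pow_one, c, mul_assoc]
  have hprod : ∀ n, ∏ k ∈ Finset.range n, conjPrecomp (c ^ k) (d 0 * d 1)
      = ∏ l ∈ Finset.range (2 * n), d l := by
    intro n
    induction n with
    | zero => simp
    | succ n ih =>
      rw [Finset.prod_range_succ, ih, map_mul, hd, hd, Nat.mul_succ, Finset.prod_range_succ,
        Finset.prod_range_succ, mul_assoc]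
      simp [add_comm]
  have hc : c ^ M i j = 1 := cs.simple_mul_simple_pow i j
  -- the left component is `∏_{l < 2m} δ_{c^l s i}`, whose factors cancel in pairs as `c ^ m = 1`
  rw [hgen, SemidirectProduct.mk_pow, hprod, two_mul, Finset.prod_range_add,
    ← Finset.prod_mul_distrib, hc]
  ext : 1
  · show ∏ l ∈ Finset.range (M i j), d l * d (M i j + l) = 1
    refine Finset.prod_eq_one fun l _ => ?_
    simp only [d, pow_add, hc, one_mul, ← Pi.mulSingle_mul]
    simp
  · rfl

noncomputable def signLift : W →* (W → ℤˣ) ⋊[conjPrecomp] W :=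
  cs.lift ⟨cs.signGen, cs.isLiftable_signGen⟩

lemma signLift_right (w : W) : (cs.signLift w).right = w := by
  change (SemidirectProduct.rightHom.comp cs.signLift) w = MonoidHom.id W w
  congr 1
  exact cs.ext_simple fun i => by simp [signLift, cs.lift_apply_simple, signGen]

/-- The cocycle `η` of Björner–Brenti (Thm. 1.4.3); it is `-1` exactly at the left inversions. -/
noncomputable def inversionSign (w t : W) : ℤˣ := (cs.signLift w).left t

lemma inversionSign_mul (u v t : W) :
    cs.inversionSign (u * v) t = cs.inversionSign u t * cs.inversionSign v (u⁻¹ * t * u) := by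
  simp only [inversionSign, map_mul, SemidirectProduct.mul_left, signLift_right]
  rfl

lemma inversionSign_one (t : W) : cs.inversionSign 1 t = 1 := by
  simp [inversionSign]

lemma inversionSign_simple_self (i : B) : cs.inversionSign (s i) (s i) = -1 := by
  simp [inversionSign, signLift, cs.lift_apply_simple, signGen]

lemma inversionSign_simple_of_ne {i : B} {t : W} (h : t ≠ s i) : cs.inversionSign (s i) t = 1 := by
  simp [inversionSign, signLift, cs.lift_apply_simple, signGen, h]

lemma inversionSign_inv (w t : W) :
    cs.inversionSign w⁻¹ (w⁻¹ * t * w) = cs.inversionSign w t := by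
  have h := cs.inversionSign_mul w w⁻¹ t
  rw [mul_inv_cancel, inversionSign_one] at h
  rw [eq_inv_of_mul_eq_one_right h.symm, Int.units_inv_eq_self]

lemma inversionSign_wordProd_of_notMem {ω : List B} {t : W} (h : t ∉ lis ω) :
    cs.inversionSign (π ω) t = 1 := by
  induction ω generalizing t with
  | nil => exact cs.inversionSign_one t
  | cons i ω ih =>
    simp only [leftInvSeq, List.mem_cons, List.mem_map, not_or, not_exists, not_and] at h
    rw [wordProd_cons, inversionSign_mul, inversionSign_simple_of_ne cs h.1, one_mul, inv_simple]
    refine ih fun hmem => h.2 _ hmem ?_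
    simp [mul_assoc]

lemma inversionSign_self {t : W} (ht : cs.IsReflection t) : cs.inversionSign t t = -1 := by
  obtain ⟨y, i, rfl⟩ := ht
  have hconj : y⁻¹ * (y * s i * y⁻¹) * y = s i := by group
  set t := y * s i * y⁻¹
  have hsi : cs.inversionSign (s i * y⁻¹) (s i) = -cs.inversionSign y t := by
    rw [inversionSign_mul, inversionSign_simple_self, inv_simple, simple_mul_simple_self, one_mul,
      ← hconj, inversionSign_inv, neg_one_mul]
  calc cs.inversionSign t t = cs.inversionSign (y * (s i * y⁻¹)) t := by rw [← mul_assoc]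
    _ = -(cs.inversionSign y t * cs.inversionSign y t) := by
      rw [inversionSign_mul, hconj, hsi, mul_neg]
    _ = -1 := by rw [Int.units_mul_self]

lemma isLeftInversion_of_inversionSign_eq_neg_one {w t : W} (h : cs.inversionSign w t = -1) :
    cs.IsLeftInversion w t := by
  obtain ⟨ω, hω, rfl⟩ := cs.exists_isReduced w
  refine cs.isLeftInversion_of_mem_leftInvSeq hω (not_not.mp fun hmem => ?_)
  rw [cs.inversionSign_wordProd_of_notMem hmem] at h
  exact absurd h (by decide)

lemma isLeftInversion_iff_inversionSign {t : W} (ht : cs.IsReflection t) (w : W) :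
    cs.IsLeftInversion w t ↔ cs.inversionSign w t = -1 := by
  refine ⟨fun hinv => ?_, cs.isLeftInversion_of_inversionSign_eq_neg_one⟩
  by_contra hne
  have hsign : cs.inversionSign (t * w) t = -1 := by
    rw [inversionSign_mul, inversionSign_self cs ht, ht.inv, ht.mul_self, one_mul,
      (Int.units_eq_one_or _).resolve_right hne, mul_one]
  exact ht.isLeftInversion_mul_right_iff.mp (cs.isLeftInversion_of_inversionSign_eq_neg_one hsign)
    hinv

lemma isRightInversion_iff_inversionSign {t : W} (ht : cs.IsReflection t) (w : W) :
    cs.IsRightInversion w t ↔ cs.inversionSign w⁻¹ t = -1 := by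
  rw [← isLeftInversion_inv_iff, isLeftInversion_iff_inversionSign cs ht]

lemma inversionSign_inv_eq_one_iff {t : W} (ht : cs.IsReflection t) (w : W) :
    cs.inversionSign w⁻¹ t = 1 ↔ ℓ w < ℓ (w * t) := by
  have hne := ht.length_mul_left_ne w
  rw [← neg_neg (1 : ℤˣ), ← Int.units_ne_iff_eq_neg, ne_eq,
    ← isRightInversion_iff_inversionSign cs ht]
  simp only [IsRightInversion, ht, true_and, not_lt]
  omega

lemma mem_rightInvSeq_of_isRightInversion {ω : List B} {t : W}
    (h : cs.IsRightInversion (π ω) t) : t ∈ ris ω := by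
  rw [isRightInversion_iff_inversionSign cs h.1, ← wordProd_reverse] at h
  by_contra hmem
  rw [cs.inversionSign_wordProd_of_notMem (by simpa [leftInvSeq_reverse] using hmem)] at h
  exact absurd h (by decide)

section Parabolic

variable {cs} {I : Set B} {x : W}

local notation "W_I" => Subgroup.closure (cs.simple '' I)

lemma exists_wordProd_eq_of_mem_closure {w : W} (hw : w ∈ W_I) :
    ∃ ω : List B, (∀ i ∈ ω, i ∈ I) ∧ π ω = w := by
  induction hw using Subgroup.closure_induction with
  | mem w hw =>
    obtain ⟨i, hi, rfl⟩ := hw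
    exact ⟨[i], by simpa using hi, cs.wordProd_singleton i⟩
  | one => exact ⟨[], by simp, cs.wordProd_nil⟩
  | mul u v _ _ ihu ihv =>
    obtain ⟨ω₁, h₁, rfl⟩ := ihu
    obtain ⟨ω₂, h₂, rfl⟩ := ihv
    exact ⟨ω₁ ++ ω₂, by simpa [or_imp, forall_and] using And.intro h₁ h₂, cs.wordProd_append ω₁ ω₂⟩
  | inv u _ ihu =>
    obtain ⟨ω, h, rfl⟩ := ihu
    exact ⟨ω.reverse, by simpa using h, cs.wordProd_reverse ω⟩

/-- A shortest word in the letters `I` for `w ≠ 1` ends in a right descent of `w`, since otherwise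
the strong exchange condition would delete a letter. -/
lemma exists_length_mul_simple_lt_of_mem_closure {w : W} (hw : w ∈ W_I)
    (hne : w ≠ 1) : ∃ i ∈ I, ℓ (w * s i) < ℓ w := by
  obtain ⟨ω, ⟨hωI, rfl⟩, hmin⟩ := exists_minimalFor_of_wellFoundedLT
    (fun ω : List B => (∀ i ∈ ω, i ∈ I) ∧ π ω = w) List.length
    (exists_wordProd_eq_of_mem_closure hw)
  obtain rfl | ⟨ρ, j, rfl⟩ := List.eq_nil_or_concat' ω
  · exact absurd cs.wordProd_nil hne
  have hρj : π (ρ ++ [j]) * s j = π ρ := by simp [wordProd_append, mul_assoc]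
  refine ⟨j, hωI j (by simp), lt_of_not_ge fun hle => ?_⟩
  have hinv : cs.IsRightInversion (π ρ) (s j) := by
    refine ⟨cs.isReflection_simple j, ?_⟩
    have := cs.length_mul_simple_ne (π (ρ ++ [j])) j
    rw [← hρj, mul_assoc, simple_mul_simple_self, mul_one]
    omega
  obtain ⟨k, hk, hkj⟩ := List.getElem_of_mem (cs.mem_rightInvSeq_of_isRightInversion hinv)
  have hdel : π (ρ.eraseIdx k) = π (ρ ++ [j]) := by
    rw [← cs.wordProd_mul_getD_rightInvSeq, List.getD_eq_getElem _ _ hk, hkj, ← hρj, mul_assoc,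
      simple_mul_simple_self, mul_one]
  have hlen : (ρ.eraseIdx k).length < (ρ ++ [j]).length := by
    rw [cs.length_rightInvSeq] at hk
    simp [List.length_eraseIdx_of_lt hk]
  have := hmin ⟨fun i hi => hωI i (by simp [(List.eraseIdx_sublist ρ k).mem hi]), hdel⟩ hlen.le
  omega

/-- The shortest element `x₀ = x v` of `x W_I` has no right inversions in `W_I`, so by the cocycle
identity `x = x₀ v⁻¹` inherits the right descents in `I` of `v⁻¹`; hence `v = 1`. -/
lemma length_le_length_mul_of_mem_closure (hx : ∀ i ∈ I, ℓ x < ℓ (x * s i)) {w : W}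
    (hw : w ∈ W_I) : ℓ x ≤ ℓ (x * w) := by
  obtain ⟨v, hv, hmin⟩ := exists_minimalFor_of_wellFoundedLT
    (· ∈ W_I) (fun v => ℓ (x * v)) ⟨1, one_mem _⟩
  have hvmin : ∀ u ∈ W_I, ℓ (x * v) ≤ ℓ (x * u) :=
    fun u hu => (le_total _ _).elim id (hmin hu)
  suffices v = 1 by simpa [this] using hvmin w hw
  by_contra hv1
  obtain ⟨j, hj, hdesc⟩ :=
    exists_length_mul_simple_lt_of_mem_closure (inv_mem hv) (inv_ne_one.mpr hv1)
  have hvj : cs.inversionSign v (s j) = -1 := by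
    simpa using (cs.isRightInversion_iff_inversionSign (cs.isReflection_simple j) v⁻¹).mp
      ⟨cs.isReflection_simple j, hdesc⟩
  set r := v⁻¹ * s j * v
  have hr : cs.IsReflection r := by simpa using (cs.isReflection_simple j).conj v⁻¹
  have hrI : r ∈ W_I :=
    mul_mem (mul_mem (inv_mem hv) (Subgroup.subset_closure ⟨j, hj, rfl⟩)) hv
  have hx₀r : cs.inversionSign (x * v)⁻¹ r = 1 := by
    refine (cs.inversionSign_inv_eq_one_iff hr _).mpr
      (lt_of_le_of_ne ?_ (hr.length_mul_left_ne _).symm)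
    rw [mul_assoc]
    exact hvmin _ (mul_mem hv hrI)
  have hxj : cs.inversionSign x⁻¹ (s j) = -1 := by
    rw [show x⁻¹ = v * (x * v)⁻¹ by group, inversionSign_mul, hvj, hx₀r, mul_one]
  exact absurd ((cs.isRightInversion_iff_inversionSign (cs.isReflection_simple j) x).mpr hxj).2
    (hx j hj).not_gt

lemma inversionSign_inv_eq_one_of_mem_closure (hx : ∀ i ∈ I, ℓ x < ℓ (x * s i)) {r : W}
    (hr : cs.IsReflection r) (hrI : r ∈ W_I) :
    cs.inversionSign x⁻¹ r = 1 :=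
  (cs.inversionSign_inv_eq_one_iff hr x).mpr
    (lt_of_le_of_ne (length_le_length_mul_of_mem_closure hx hrI) (hr.length_mul_left_ne x).symm)

lemma length_conj_lt_mul_conj_simple_iff (hx : ∀ i ∈ I, ℓ x < ℓ (x * s i)) {u : W}
    (hu : u ∈ W_I) {i : B} (hi : i ∈ I) :
    ℓ (x * u * x⁻¹) < ℓ (x * u * x⁻¹ * (x * s i * x⁻¹)) ↔ ℓ u < ℓ (u * s i) := by
  have hsi : s i ∈ W_I := Subgroup.subset_closure ⟨i, hi, rfl⟩
  have hxt : x⁻¹ * (x * s i * x⁻¹) * x = s i := by group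
  have hx_t : cs.inversionSign x (x * s i * x⁻¹) = 1 := by
    rw [← inversionSign_inv, hxt]
    exact inversionSign_inv_eq_one_of_mem_closure hx (cs.isReflection_simple i) hsi
  have hx_usu : cs.inversionSign x⁻¹ (u * s i * u⁻¹) = 1 :=
    inversionSign_inv_eq_one_of_mem_closure hx ((cs.isReflection_simple i).conj u)
      (mul_mem (mul_mem hu hsi) (inv_mem hu))
  rw [← cs.inversionSign_inv_eq_one_iff ((cs.isReflection_simple i).conj x),
    ← cs.inversionSign_inv_eq_one_iff (cs.isReflection_simple i),
    show (x * u * x⁻¹)⁻¹ = x * (u⁻¹ * x⁻¹) by group, inversionSign_mul, hxt, inversionSign_mul,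
    inv_inv, hx_t, hx_usu, one_mul, mul_one]

lemma aStep_conj_iff (hx : ∀ i ∈ I, ℓ x < ℓ (x * s i)) {u v : W}
    (hu : u ∈ W_I) :
    cs.AStep ((fun g => x * g * x⁻¹) '' (cs.simple '' I)) (x * u * x⁻¹) (x * v * x⁻¹) ↔
      v ∈ W_I ∧ cs.AStep (cs.simple '' I) u v := by
  constructor
  · rintro ⟨_, ⟨_, ⟨i, hi, rfl⟩, rfl⟩, -, hv, hlen⟩
    rw [hv] at hlen
    obtain rfl : v = u * s i := by simpa [mul_assoc] using congrArg (fun g => x⁻¹ * g * x) hv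
    exact ⟨mul_mem hu (Subgroup.subset_closure ⟨i, hi, rfl⟩), s i, ⟨i, hi, rfl⟩,
      cs.isReflection_simple i, rfl,
      (length_conj_lt_mul_conj_simple_iff hx hu hi).mp hlen⟩
  · rintro ⟨-, _, ⟨i, hi, rfl⟩, -, rfl, hlen⟩
    refine ⟨x * s i * x⁻¹, ⟨s i, ⟨i, hi, rfl⟩, rfl⟩, (cs.isReflection_simple i).conj x,
      by group, ?_⟩
    rw [show x * (u * s i) * x⁻¹ = x * u * x⁻¹ * (x * s i * x⁻¹) by group]
    exact (length_conj_lt_mul_conj_simple_iff hx hu hi).mpr hlen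

lemma reflTransGen_aStep_conj_iff (hx : ∀ i ∈ I, ℓ x < ℓ (x * s i)) (u : W) :
    Relation.ReflTransGen (cs.AStep ((fun g => x * g * x⁻¹) '' (cs.simple '' I))) 1
        (x * u * x⁻¹) ↔
      u ∈ W_I ∧ Relation.ReflTransGen
        (fun u v => u ∈ W_I ∧ v ∈ W_I ∧ cs.AStep (cs.simple '' I) u v) 1 u := by
  constructor
  · suffices ∀ v, Relation.ReflTransGen
        (cs.AStep ((fun g => x * g * x⁻¹) '' (cs.simple '' I))) 1 v →
        x⁻¹ * v * x ∈ W_I ∧ Relation.ReflTransGen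
          (fun u v => u ∈ W_I ∧ v ∈ W_I ∧ cs.AStep (cs.simple '' I) u v) 1 (x⁻¹ * v * x) by
      intro h
      simpa [mul_assoc] using this _ h
    intro v hv
    induction hv with
    | refl => simpa using Relation.ReflTransGen.refl
    | @tail b c _ hstep ih =>
      rw [show b = x * (x⁻¹ * b * x) * x⁻¹ by group, show c = x * (x⁻¹ * c * x) * x⁻¹ by group,
        aStep_conj_iff hx ih.1] at hstep
      exact ⟨hstep.1, ih.2.tail ⟨ih.1, hstep⟩⟩
  · rintro ⟨-, h⟩
    simpa [Function.onFun] using h.lift (fun g => x * g * x⁻¹) fun a b ⟨ha, hb, hab⟩ =>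
      (aStep_conj_iff hx ha).mpr ⟨hb, hab⟩

end Parabolic

end CoxeterSystem

open CoxeterSystem in
/-- For `I ⊆ S` and `x ∈ W^I` a minimal coset representative,
`x ⟨I⟩_{W_I} x⁻¹ = ⟨x I x⁻¹⟩`, where `⟨I⟩_{W_I}` is the Bruhat preclosure computed in the
standard parabolic subgroup `W_I`. -/
theorem conj_bclosure_parabolic
    {B : Type*} {W : Type*} [Group W] {M : CoxeterMatrix B} (cs : CoxeterSystem M W)
    (I : Set B) (x : W)
    (hx : ∀ i ∈ I, cs.length x < cs.length (x * cs.simple i)) :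
    (fun g => x * g * x⁻¹) ''
        cs.bclosureIn (Subgroup.closure (cs.simple '' I)) (cs.simple '' I)
      = cs.bclosure ((fun g => x * g * x⁻¹) '' (cs.simple '' I)) := by
  have hinj : Function.Injective fun g : W => x * g * x⁻¹ := fun a b h => by simpa using h
  ext t'
  obtain ⟨t, rfl⟩ : ∃ t, x * t * x⁻¹ = t' := ⟨x⁻¹ * t' * x, by group⟩
  simp only [hinj.mem_set_image, bclosureIn, bclosure, Set.mem_ofPred_eq, isReflection_conj_iff,
    reflTransGen_aStep_conj_iff hx]
end
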